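/- Let T be a tree and S = (S_A, S_B, S_C) a labeling of T such that (T, S) belongs to the family 𝒯. Then S_A and S_B are both independent sets of T (no two vertices of S_A are adjacent, and no two vertices of S_B are adjacent). -/

import Mathlib

open SimpleGraph

/-- A dominating set: every vertex outside `S` has a neighbor in `S`. -/
def IsDominatingSet {V : Type} (G : SimpleGraph V) (S : Set V) : Prop :=
  ∀ v ∉ S, ∃ u ∈ S, G.Adj u v

/-- A total dominating set: every vertex has a neighbor in `S`. -/
def IsTotalDominatingSet {V : Type} (G : SimpleGraph V) (S : Set V) : Prop :=
  ∀ v : V, ∃ u ∈ S, G.Adj u v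

/-- `u` is within distance two of `v`. -/
def WithinTwo {V : Type} (G : SimpleGraph V) (u v : V) : Prop :=
  G.Adj u v ∨ ∃ w, G.Adj u w ∧ G.Adj w v

/-- A semitotal dominating set: a dominating set in which every vertex is within
distance two of another vertex of the set. -/
def IsSemitotalDominatingSet {V : Type} (G : SimpleGraph V) (S : Set V) : Prop :=
  IsDominatingSet G S ∧ ∀ v ∈ S, ∃ u ∈ S, u ≠ v ∧ WithinTwo G u v

/-- The domination number `γ(G)`. -/
noncomputable def dominationNumber {V : Type} (G : SimpleGraph V) : ℕ :=
  sInf {n | ∃ S : Set V, IsDominatingSet G S ∧ S.ncard = n}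

/-- The total domination number `γ_t(G)`. -/
noncomputable def totalDominationNumber {V : Type} (G : SimpleGraph V) : ℕ :=
  sInf {n | ∃ S : Set V, IsTotalDominatingSet G S ∧ S.ncard = n}

/-- The semitotal domination number `γ_t2(G)`. -/
noncomputable def semitotalDominationNumber {V : Type} (G : SimpleGraph V) : ℕ :=
  sInf {n | ∃ S : Set V, IsSemitotalDominatingSet G S ∧ S.ncard = n}

/-- A leaf: a vertex of degree one. -/
def IsLeaf {V : Type} (G : SimpleGraph V) (v : V) : Prop :=
  (G.neighborSet v).ncard = 1

/-- A support vertex: a vertex adjacent to a leaf. -/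
def IsSupport {V : Type} (G : SimpleGraph V) (v : V) : Prop :=
  ∃ u, G.Adj v u ∧ IsLeaf G u

/-- A star: a graph isomorphic to `K_{1,m}` for some `m ≥ 1`. -/
def IsStar {V : Type} (G : SimpleGraph V) : Prop :=
  ∃ m : ℕ, 1 ≤ m ∧ Nonempty (G ≃g completeBipartiteGraph Unit (Fin m))

/-- The graph obtained from the disjoint union of `G` and `H` by adding
the single edge joining `v : V` to `w : W`. -/
def attach {V W : Type} (G : SimpleGraph V) (H : SimpleGraph W) (v : V) (w : W) :
    SimpleGraph (V ⊕ W) where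
  Adj x y :=
    match x, y with
    | Sum.inl a, Sum.inl b => G.Adj a b
    | Sum.inr a, Sum.inr b => H.Adj a b
    | Sum.inl a, Sum.inr b => a = v ∧ b = w
    | Sum.inr a, Sum.inl b => b = v ∧ a = w
  symm := by
    constructor
    rintro (a | a) (b | b) h
    · first | exact h.symm | exact G.symm.symm _ _ h
    · exact ⟨h.1, h.2⟩
    · exact ⟨h.1, h.2⟩
    · first | exact h.symm | exact H.symm.symm _ _ h
  loopless := by
    constructor
    rintro (a | a) h
    · first | exact G.loopless.irrefl a h | exact G.irrefl h
    · first | exact H.loopless.irrefl a h | exact H.irrefl h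

/-- The statuses used to label the vertices of trees in the family `𝒯`. -/
inductive Label : Type
  | A | B | C
deriving DecidableEq

/-- The labeling of the path `P₅` assigning `A` to the two support vertices,
`C` to the two leaves and `B` to the center. -/
def pathLabel : Fin 5 → Label
  | 0 => Label.C
  | 1 => Label.A
  | 2 => Label.B
  | 3 => Label.A
  | 4 => Label.C

/-- The family `𝒯` of labeled trees: it contains the labeled path `P₅`, and is closed
under operation `𝒪₁` (attach a new leaf labeled `C` to a vertex labeled `A`), operation
`𝒪₂` (attach a labeled path `P₅` to a degree-one vertex labeled `C`), and under
isomorphism of labeled graphs. -/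
inductive TFamily : ∀ {V : Type}, SimpleGraph V → (V → Label) → Prop
  | base : TFamily (SimpleGraph.pathGraph 5) pathLabel
  | op1 {V : Type} {G : SimpleGraph V} {f : V → Label} (v : V)
      (hv : f v = Label.A) (h : TFamily G f) :
      TFamily (attach G (⊥ : SimpleGraph (Fin 1)) v 0)
        (Sum.elim f (fun _ => Label.C))
  | op2 {V : Type} {G : SimpleGraph V} {f : V → Label} (v : V)
      (hv : f v = Label.C) (hdeg : (G.neighborSet v).ncard = 1) (h : TFamily G f) :
      TFamily (attach G (SimpleGraph.pathGraph 5) v 0) (Sum.elim f pathLabel)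
  | iso {V W : Type} {G : SimpleGraph V} {H : SimpleGraph W} {f : V → Label}
      (e : G ≃g H) (h : TFamily G f) : TFamily H (fun w => f (e.symm w))

/-- The subdivided star with `t` leaves: center `none`, and for each `i : Fin t`
a path `none — some (i,0) — some (i,1)`. -/
def subdividedStar (t : ℕ) : SimpleGraph (Option (Fin t × Fin 2)) :=
  SimpleGraph.fromRel (fun x y =>
    match x, y with
    | none, some p => p.2 = 0
    | some p, some q => p.1 = q.1 ∧ p.2 = 0 ∧ q.2 = 1
    | _, _ => False)

/-- The tree `Y` with three leaves, obtained from the star `K_{1,3}` with center `0`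
by subdividing exactly one edge: edges `0-1`, `0-2`, `0-3`, `3-4`.  Its leaves are
`1`, `2`, `4`; the leaf-neighbors of the center are `1` and `2`. -/
def Ytree : SimpleGraph (Fin 5) :=
  SimpleGraph.fromRel (fun x y =>
    (x = 0 ∧ y = 1) ∨ (x = 0 ∧ y = 2) ∨ (x = 0 ∧ y = 3) ∨ (x = 3 ∧ y = 4))

/-- An almost dominating set of `G` relative to `v`: dominates every vertex except
possibly `v`. -/
def IsAlmostDominatingSet {V : Type} (G : SimpleGraph V) (v : V) (S : Set V) : Prop :=
  ∀ w, w ≠ v → w ∉ S → ∃ u ∈ S, G.Adj u w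

/-- The almost domination number `γ(G; v)`. -/
noncomputable def almostDominationNumber {V : Type} (G : SimpleGraph V) (v : V) : ℕ :=
  sInf {n | ∃ S : Set V, IsAlmostDominatingSet G v S ∧ S.ncard = n}

/-- The family `𝒪` of trees: all trees obtainable from the path `P₄` by a finite
sequence of the operations `𝒪₁`–`𝒪₄` (and taking isomorphic copies). -/
inductive OFamily : ∀ {V : Type}, SimpleGraph V → Prop
  | base : OFamily (SimpleGraph.pathGraph 4)
  | op1 {V : Type} {G : SimpleGraph V} (v : V)
      (hv : ∃ S : Set V, IsSemitotalDominatingSet G S ∧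
        S.ncard = semitotalDominationNumber G ∧ v ∈ S)
      (h : OFamily G) :
      OFamily (attach G (⊥ : SimpleGraph (Fin 1)) v 0)
  | op2short {V : Type} {G : SimpleGraph V} (v : V)
      (hv : almostDominationNumber G v = dominationNumber G) (h : OFamily G) :
      OFamily (attach G (SimpleGraph.pathGraph 2) v 0)
  | op2long {V : Type} {G : SimpleGraph V} (v : V)
      (hv : almostDominationNumber G v = dominationNumber G) (h : OFamily G) :
      OFamily (attach G (SimpleGraph.pathGraph 5) v 0)
  | op3 {V : Type} {G : SimpleGraph V} (v : V) (t : ℕ) (ht : 2 ≤ t) (h : OFamily G) :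
      OFamily (attach G (subdividedStar t) v none)
  | op4 {V : Type} {G : SimpleGraph V} (v : V) (h : OFamily G) :
      OFamily (attach G Ytree v 1)
  | iso {V W : Type} {G : SimpleGraph V} {H : SimpleGraph W}
      (e : G ≃g H) (h : OFamily G) : OFamily H

/-!
The labeling of `P₅` is a proper colouring, and each edge created by `𝒪₁` or `𝒪₂` has an
endpoint of status `C`. Hence no edge of a tree in `𝒯` joins two vertices of the same
status `A`, or of the same status `B`.
-/

namespace SimpleGraph

variable {V W : Type}

theorem IsIndepSet.not_adj {G : SimpleGraph V} {s : Set V} (hs : G.IsIndepSet s) {u v : V}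
    (hu : u ∈ s) (hv : v ∈ s) : ¬ G.Adj u v :=
  fun hadj => hs hu hv hadj.ne hadj

theorem IsIndepSet.preimage_iso {G : SimpleGraph V} {H : SimpleGraph W} {s : Set V}
    (hs : G.IsIndepSet s) (e : G ≃g H) : H.IsIndepSet (e.symm ⁻¹' s) :=
  fun _ hu _ hv hne hadj => hs hu hv (e.symm.injective.ne hne) (e.symm.map_adj_iff.mpr hadj)

theorem isIndepSet_attach {G : SimpleGraph V} {H : SimpleGraph W} {v : V} {w : W}
    {s : Set (V ⊕ W)} (hG : G.IsIndepSet (Sum.inl ⁻¹' s)) (hH : H.IsIndepSet (Sum.inr ⁻¹' s))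
    (hvw : Sum.inl v ∉ s ∨ Sum.inr w ∉ s) : (attach G H v w).IsIndepSet s := by
  rintro (a | a) ha (b | b) hb hne hadj
  · exact hG.not_adj ha hb hadj
  · obtain ⟨rfl, rfl⟩ := hadj
    tauto
  · obtain ⟨rfl, rfl⟩ := hadj
    tauto
  · exact hH.not_adj ha hb hadj

end SimpleGraph

theorem pathGraph_isIndepSet_pathLabel (l : Label) :
    (pathGraph 5).IsIndepSet {i | pathLabel i = l} := by
  intro i hi j hj _ hadj
  rw [pathGraph_adj] at hadj
  fin_cases i <;> fin_cases j <;> cases l <;> simp_all [pathLabel]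

theorem TFamily.isIndepSet_label {V : Type} {G : SimpleGraph V} {f : V → Label}
    (h : TFamily G f) {l : Label} (hl : l ≠ Label.C) : G.IsIndepSet {v | f v = l} := by
  induction h with
  | base => exact pathGraph_isIndepSet_pathLabel l
  | op1 _ _ _ ih =>
    exact isIndepSet_attach ih (Set.subsingleton_of_subsingleton.pairwise _) (.inr hl.symm)
  | op2 _ hv _ _ ih =>
    exact isIndepSet_attach ih (pathGraph_isIndepSet_pathLabel l)
      (.inl fun hvl => hl (hvl.symm.trans hv))
  | iso e _ ih => exact ih.preimage_iso e

theorem tFamily_A_and_B_independent_general {V : Type} (T : SimpleGraph V)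
    (f : V → Label) (h : TFamily T f) :
    (∀ u v : V, f u = Label.A → f v = Label.A → ¬ T.Adj u v) ∧
      (∀ u v : V, f u = Label.B → f v = Label.B → ¬ T.Adj u v) :=
  ⟨fun _ _ hu hv => (h.isIndepSet_label (by decide)).not_adj hu hv,
    fun _ _ hu hv => (h.isIndepSet_label (by decide)).not_adj hu hv⟩

/-- If `(T, S) ∈ 𝒯`, then `S_A` and `S_B` are independent sets of `T`. -/
theorem tFamily_A_and_B_independent {V : Type} [Fintype V] (T : SimpleGraph V)
    (f : V → Label) (hT : T.IsTree) (h : TFamily T f) :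
    (∀ u v : V, f u = Label.A → f v = Label.A → ¬ T.Adj u v) ∧
      (∀ u v : V, f u = Label.B → f v = Label.B → ¬ T.Adj u v) :=
  tFamily_A_and_B_independent_general T f h
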